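/- Let n be a natural number and let W_n act on ℤ^n via the representation ρ. Then the second group cohomology H²(W_n, ℤ^n) is isomorphic to (ℤ/2)^n. -/

import Mathlib

/-- The relators `x̄_i²` of `W_n`, the free product of `n` copies of `C_2`. -/
def Wrels (n : ℕ) : Set (FreeGroup (Fin n)) :=
  Set.range fun i : Fin n => FreeGroup.of i ^ 2

/-- The group `W_n = C_2 * ⋯ * C_2` (`n` factors). -/
abbrev W (n : ℕ) : Type := PresentedGroup (Wrels n)

/-- The generators `x̄_1, …, x̄_n` of `W_n`. -/
def xbar (n : ℕ) (i : Fin n) : W n := PresentedGroup.of i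

/-- The linear map `diag(-1, …, -1, 1, -1, …, -1)` on `ℤⁿ` (entry `1` in position `i`). -/
def Dmap (n : ℕ) (i : Fin n) : (Fin n → ℤ) →ₗ[ℤ] (Fin n → ℤ) where
  toFun v := fun j => if j = i then v j else -v j
  map_add' u v := by funext j; by_cases h : j = i <;> simp [h] <;> ring
  map_smul' c v := by funext j; by_cases h : j = i <;> simp [h]

theorem Dmap_sq (n : ℕ) (i : Fin n) : Dmap n i * Dmap n i = 1 := by
  apply LinearMap.ext
  intro v
  funext j
  by_cases h : j = i <;> simp [Dmap, Module.End.mul_apply, h]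

/-- `Dmap n i` as a unit of the endomorphism ring, i.e. a linear automorphism. -/
def Dunit (n : ℕ) (i : Fin n) : ((Fin n → ℤ) →ₗ[ℤ] (Fin n → ℤ))ˣ :=
  ⟨Dmap n i, Dmap n i, Dmap_sq n i, Dmap_sq n i⟩

theorem Dunit_sq (n : ℕ) (i : Fin n) : Dunit n i ^ 2 = 1 := by
  rw [sq]
  exact Units.ext (Dmap_sq n i)

/-- The representation `ρ : W_n → GL_n(ℤ)`, with `ρ(x̄_i) = diag(-1,…,-1,1,-1,…,-1)`. -/
def rho (n : ℕ) : W n →* ((Fin n → ℤ) →ₗ[ℤ] (Fin n → ℤ))ˣ :=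
  PresentedGroup.toGroup (f := Dunit n) (by
    rintro r ⟨i, rfl⟩
    simp [Dunit_sq])

theorem rho_of (n : ℕ) (i : Fin n) : rho n (xbar n i) = Dunit n i :=
  PresentedGroup.toGroup.of _

/-- `ρ` as a representation of `W_n` on `ℤⁿ`. -/
def rep (n : ℕ) : Representation ℤ (W n) (Fin n → ℤ) :=
  (Units.coeHom ((Fin n → ℤ) →ₗ[ℤ] (Fin n → ℤ))).comp (rho n)

/-!
The coordinate lines of `ℤⁿ` are `W_n`-stable: `x̄_i` acts on `e_j` by `1` if `i = j` and by `-1`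
otherwise. For a 2-cocycle `f` the invariant `Φ(f)_i = f(x̄_i, x̄_i)_i + f(1, 1)_i mod 2` vanishes on
coboundaries. If `Φ(f) = 0`, each `x̄_i` lifts to an involution of the extension of `W_n` by `ℤⁿ`
classified by `f` (in the coordinates `j ≠ i` the cocycle identity kills the obstruction), so,
`W_n` being the free product of the groups `⟨x̄_i⟩`, that extension splits and `f` is a coboundary.
Finally `Φ` is onto: pulling back a cocycle of `ℤ/2 × ℤˣ` along `g ↦ (parity of x̄_j in g, sign of
g on e_j)` into the `j`-th coordinate gives `Φ = e_j`.
-/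

namespace groupCohomology

universe u

variable {k G : Type u} [CommRing k] [Group G] {A : Rep k G}

theorem cocycles₂_ρ_map_self_add_map_one_one (f : cocycles₂ A) {g : G} (hg : g * g = 1) :
    A.ρ g (f (g, g) + f (1, 1)) = f (g, g) + f (1, 1) := by
  have h := (mem_cocycles₂_iff f).1 f.2 g g g
  rw [hg, cocycles₂_map_one_fst f g, cocycles₂_map_one_snd f g] at h
  rw [map_add, ← h, add_comm]

theorem d₁₂_apply_self_add_d₁₂_apply_one_one (u : G → A) {g : G} (hg : g * g = 1) :
    d₁₂ A u (g, g) + d₁₂ A u (1, 1) = A.ρ g (u g) + u g := by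
  simp only [d₁₂_hom_apply, hg, mul_one, map_one, Module.End.one_apply]
  abel

/-- The extension of `G` by `A` classified by the 2-cocycle `f`. -/
@[ext]
structure CocycleExtension (_f : cocycles₂ A) where
  fst : A
  snd : G

namespace CocycleExtension

variable (f : cocycles₂ A)

instance : Group (CocycleExtension f) where
  mul p q := ⟨p.fst + A.ρ p.snd q.fst + f (p.snd, q.snd), p.snd * q.snd⟩
  one := ⟨-f (1, 1), 1⟩
  inv p := ⟨-A.ρ p.snd⁻¹ p.fst - f (1, 1) - f (p.snd⁻¹, p.snd), p.snd⁻¹⟩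
  mul_assoc p q r := by
    refine CocycleExtension.ext ?_ (mul_assoc p.snd q.snd r.snd)
    show p.fst + A.ρ p.snd q.fst + f (p.snd, q.snd) + A.ρ (p.snd * q.snd) r.fst
        + f (p.snd * q.snd, r.snd)
      = p.fst + A.ρ p.snd (q.fst + A.ρ q.snd r.fst + f (q.snd, r.snd)) + f (p.snd, q.snd * r.snd)
    have hf := (mem_cocycles₂_iff f).1 f.2 p.snd q.snd r.snd
    rw [map_mul, Module.End.mul_apply, map_add, map_add, eq_sub_of_add_eq hf]
    abel
  one_mul p := by
    refine CocycleExtension.ext ?_ (one_mul p.snd)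
    show -f (1, 1) + A.ρ 1 p.fst + f (1, p.snd) = p.fst
    rw [map_one, Module.End.one_apply, cocycles₂_map_one_fst f p.snd]
    abel
  mul_one p := by
    refine CocycleExtension.ext ?_ (mul_one p.snd)
    show p.fst + A.ρ p.snd (-f (1, 1)) + f (p.snd, 1) = p.fst
    rw [map_neg, cocycles₂_map_one_snd f p.snd]
    abel
  inv_mul_cancel p := by
    refine CocycleExtension.ext ?_ (inv_mul_cancel p.snd)
    show -A.ρ p.snd⁻¹ p.fst - f (1, 1) - f (p.snd⁻¹, p.snd) + A.ρ p.snd⁻¹ p.fst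
      + f (p.snd⁻¹, p.snd) = -f (1, 1)
    abel

theorem mul_def (p q : CocycleExtension f) :
    p * q = ⟨p.fst + A.ρ p.snd q.fst + f (p.snd, q.snd), p.snd * q.snd⟩ := rfl

theorem one_def : (1 : CocycleExtension f) = ⟨-f (1, 1), 1⟩ := rfl

theorem mk_mul_mk_self_eq_one_iff (a : A) (g : G) :
    (⟨a, g⟩ * ⟨a, g⟩ : CocycleExtension f) = 1 ↔
      g * g = 1 ∧ a + A.ρ g a + (f (g, g) + f (1, 1)) = 0 := by
  simp only [mul_def, one_def, CocycleExtension.mk.injEq, eq_neg_iff_add_eq_zero, add_assoc]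
  exact and_comm

def proj : CocycleExtension f →* G where
  toFun := snd
  map_one' := rfl
  map_mul' _ _ := rfl

end CocycleExtension

open CocycleExtension in
theorem mem_coboundaries₂_of_splitting (f : cocycles₂ A) (σ : G →* CocycleExtension f)
    (hσ : (proj f).comp σ = MonoidHom.id G) : ⇑f ∈ coboundaries₂ A := by
  have hsnd (g : G) : (σ g).snd = g := DFunLike.congr_fun hσ g
  refine ⟨fun g => -(σ g).fst, funext fun ⟨g, h⟩ => ?_⟩
  have hmul := congrArg fst (map_mul σ g h)
  rw [mul_def, hsnd, hsnd] at hmul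
  simp only [d₁₂_hom_apply, map_neg, hmul]
  abel

noncomputable def H2EquivOfKer {M : Type*} [AddCommGroup M] [Module k M]
    (φ : cocycles₂ A →ₗ[k] M) (hφ : Function.Surjective φ)
    (hker : ∀ f, φ f = 0 ↔ ⇑f ∈ coboundaries₂ A) : H2 A ≃ₗ[k] M :=
  ((H2π A).hom.quotKerEquivOfSurjective ((ModuleCat.epi_iff_surjective _).1 inferInstance)).symm
    ≪≫ₗ Submodule.quotEquivOfEq _ _ (by ext f; exact (H2π_eq_zero_iff f).trans (hker f).symm)
    ≪≫ₗ φ.quotKerEquivOfSurjective hφ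

end groupCohomology

open groupCohomology

namespace W

variable {n : ℕ}

theorem xbar_mul_self (i : Fin n) : xbar n i * xbar n i = 1 := by
  rw [← sq]
  exact PresentedGroup.one_of_mem ⟨i, rfl⟩

def lift {H : Type*} [Group H] (x : Fin n → H) (hx : ∀ i, x i * x i = 1) : W n →* H :=
  PresentedGroup.toGroup (f := x) (by
    rintro _ ⟨i, rfl⟩
    rw [map_pow, FreeGroup.lift_apply_of, sq, hx])

@[simp]
theorem lift_xbar {H : Type*} [Group H] (x : Fin n → H) (hx : ∀ i, x i * x i = 1) (i : Fin n) :
    lift x hx (xbar n i) = x i :=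
  PresentedGroup.toGroup.of _

theorem hom_ext {M : Type*} [Monoid M] {φ ψ : W n →* M}
    (h : ∀ i, φ (xbar n i) = ψ (xbar n i)) : φ = ψ := by
  have hunits : φ.toHomUnits = ψ.toHomUnits := PresentedGroup.ext fun i => Units.ext (h i)
  ext g
  exact congrArg Units.val (DFunLike.congr_fun hunits g)

def sign (n : ℕ) : W n →* (Fin n → ℤˣ) :=
  lift (fun i j => if j = i then 1 else -1) fun i => by
    funext j
    simp only [Pi.mul_apply, Pi.one_apply]
    split_ifs <;> simp

def parity (n : ℕ) : W n →* (Fin n → Multiplicative (ZMod 2)) :=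
  lift (fun i => Pi.mulSingle i (Multiplicative.ofAdd 1)) fun i => by
    rw [← Pi.mulSingle_mul, ← ofAdd_add, show (1 + 1 : ZMod 2) = 0 from rfl, ofAdd_zero,
      Pi.mulSingle_one]

theorem sign_xbar_self (i : Fin n) : sign n (xbar n i) i = 1 := by simp [sign]

theorem sign_xbar_of_ne {i j : Fin n} (h : j ≠ i) : sign n (xbar n i) j = -1 := by
  simp [sign, h]

theorem parity_xbar_self (i : Fin n) : (parity n (xbar n i) i).toAdd = 1 := by simp [parity]

theorem rep_eq_toModuleEnd_comp_sign (n : ℕ) :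
    rep n = (DistribMulAction.toModuleEnd ℤ (Fin n → ℤ)).comp (sign n) := by
  refine hom_ext fun i => LinearMap.ext fun v => funext fun j => ?_
  simp [rep, rho_of, Dunit, Dmap, sign]

theorem rep_apply_apply (g : W n) (v : Fin n → ℤ) (j : Fin n) :
    rep n g v j = (sign n g j : ℤ) * v j := by
  rw [rep_eq_toModuleEnd_comp_sign]
  rfl

/-- Half the 2-cocycle of the extension `2ℤ → ℤ ⋊ ℤˣ → ℤ/2 × ℤˣ` for the section
`(a, s) ↦ (a.val, s)`. -/
def carry (a : ZMod 2) (s : ℤˣ) (b : ZMod 2) : ℤ := (a.val + s * b.val - (a + b).val) / 2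

theorem carry_add_carry : ∀ (a b c : ZMod 2) (s t : ℤˣ),
    carry (a + b) (s * t) c + carry a s b = s * carry b t c + carry a s (b + c) := by
  decide

def carryCocycle (n : ℕ) (j : Fin n) : cocycles₂ (Rep.of (rep n)) :=
  ⟨fun p => Pi.single j (carry (parity n p.1 j).toAdd (sign n p.1 j) (parity n p.2 j).toAdd), by
    rw [mem_cocycles₂_iff]
    intro g h k
    funext l
    show _ + _ = rep n g _ l + _
    rcases eq_or_ne l j with rfl | hl
    · simp only [Pi.single_eq_same, rep_apply_apply, map_mul, Pi.mul_apply, toAdd_mul]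
      exact carry_add_carry _ _ _ _ _
    · simp [Pi.single_eq_of_ne hl, rep_apply_apply]⟩

theorem carryCocycle_apply (j : Fin n) (g h : W n) :
    carryCocycle n j (g, h)
      = Pi.single j (carry (parity n g j).toAdd (sign n g j) (parity n h j).toAdd) := rfl

def invariant (n : ℕ) : cocycles₂ (Rep.of (rep n)) →ₗ[ℤ] (Fin n → ZMod 2) where
  toFun f i := ((f.1 (xbar n i, xbar n i) + f.1 (1, 1)) i : ZMod 2)
  map_add' f g := by
    funext i
    simp only [Submodule.coe_add, Pi.add_apply, Int.cast_add]
    ring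
  map_smul' c f := by
    funext i
    simp only [Submodule.coe_smul, Pi.smul_apply, Pi.add_apply, smul_eq_mul, RingHom.id_apply,
      Int.cast_mul, Int.cast_add]
    ring

theorem invariant_apply (f : cocycles₂ (Rep.of (rep n))) (i : Fin n) :
    invariant n f i = ((f (xbar n i, xbar n i) + f (1, 1)) i : ZMod 2) := rfl

theorem invariant_eq_zero_of_mem_coboundaries₂ (f : cocycles₂ (Rep.of (rep n)))
    (hf : ⇑f ∈ coboundaries₂ (Rep.of (rep n))) : invariant n f = 0 := by
  obtain ⟨u, hu⟩ := hf
  funext i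
  rw [invariant_apply, ← hu, d₁₂_apply_self_add_d₁₂_apply_one_one u (xbar_mul_self i),
    Pi.add_apply, Rep.of_ρ, rep_apply_apply, sign_xbar_self, Units.val_one, one_mul, ← two_mul,
    Int.cast_mul, Pi.zero_apply, Int.cast_ofNat, show (2 : ZMod 2) = 0 from rfl, zero_mul]

theorem invariant_carryCocycle (j : Fin n) : invariant n (carryCocycle n j) = Pi.single j 1 := by
  funext i
  rcases eq_or_ne i j with rfl | hi
  · simp only [invariant_apply, Pi.add_apply, carryCocycle_apply, Pi.single_eq_same,
      parity_xbar_self, sign_xbar_self, map_one, Pi.one_apply, toAdd_one]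
    rfl
  · simp [invariant_apply, carryCocycle_apply, Pi.single_eq_of_ne hi]

theorem invariant_surjective (n : ℕ) : Function.Surjective (invariant n) := by
  intro v
  refine ⟨∑ j, ((v j).val : ℤ) • carryCocycle n j, funext fun i => ?_⟩
  simp only [map_sum, map_zsmul, invariant_carryCocycle, Finset.sum_apply, Pi.smul_apply,
    Pi.single_apply, smul_ite, smul_zero, Finset.sum_ite_eq, Finset.mem_univ, if_true]
  simp

theorem exists_mk_mul_self_eq_one_of_invariant_eq_zero (f : cocycles₂ (Rep.of (rep n)))
    (i : Fin n) (hf : invariant n f i = 0) :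
    ∃ a, (⟨a, xbar n i⟩ * ⟨a, xbar n i⟩ : CocycleExtension f) = 1 := by
  set c := f (xbar n i, xbar n i) + f (1, 1) with hc
  have hc_even : 2 ∣ c i := (ZMod.intCast_zmod_eq_zero_iff_dvd _ 2).1 hf
  have hc_ne {l : Fin n} (hl : l ≠ i) : c l = 0 := by
    have h := congrFun (cocycles₂_ρ_map_self_add_map_one_one f (xbar_mul_self i)) l
    rw [Rep.of_ρ, rep_apply_apply, sign_xbar_of_ne hl, Units.val_neg, Units.val_one, ← hc] at h
    linarith
  refine ⟨Pi.single i (-(c i / 2)),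
    (CocycleExtension.mk_mul_mk_self_eq_one_iff f _ _).2 ⟨xbar_mul_self i, funext fun l => ?_⟩⟩
  rw [Pi.add_apply, Pi.add_apply, Rep.of_ρ, rep_apply_apply, ← hc, Pi.zero_apply]
  rcases eq_or_ne l i with rfl | hl
  · rw [Pi.single_eq_same, sign_xbar_self, Units.val_one]
    omega
  · rw [Pi.single_eq_of_ne hl, mul_zero, hc_ne hl]
    rfl

theorem mem_coboundaries₂_of_invariant_eq_zero (f : cocycles₂ (Rep.of (rep n)))
    (hf : invariant n f = 0) : ⇑f ∈ coboundaries₂ (Rep.of (rep n)) := by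
  choose a ha using fun i => exists_mk_mul_self_eq_one_of_invariant_eq_zero f i (congrFun hf i)
  exact mem_coboundaries₂_of_splitting f (lift _ ha)
    (hom_ext fun i => by simp [CocycleExtension.proj])

end W

theorem stmt13 (n : ℕ) :
    Nonempty (groupCohomology.H2 (Rep.of (rep n)) ≃+ (Fin n → ZMod 2)) :=
  ⟨(H2EquivOfKer (W.invariant n) (W.invariant_surjective n) fun f =>
    ⟨W.mem_coboundaries₂_of_invariant_eq_zero f,
      W.invariant_eq_zero_of_mem_coboundaries₂ f⟩).toAddEquiv⟩
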